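/- Let θ = 0.838, Δ₁ = log(5.995θ − 1) + ∫₂^{5.995θ − 2} (log(s−1)/s) · log((5.995θ − 1)/(s+1)) ds, and Δ₂ = log((11.99θ − 2)/(3θ − 2)) + ∫₂^{5.995θ − 2} (log(s−1)/s) · log((5.995θ − 1)(5.995θ − 1 − s)/(s+1)) ds. Then Δ₁ − (1/2)Δ₂ ≥ 0.0009. -/

import Mathlib

/-!
With `c = 5.995θ - 1 = 4.02381` and `k = c (3θ - 2) / 2` one has `(11.99θ - 2) / (3θ - 2) = c² / k`,
so the logarithms combine into
`2 (Δ₁ - Δ₂ / 2) = log k - ∫₂^{c-1} log (s - 1) / s * log ((s + 1) (c - s) / c) ds`.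
On `[2, c - 1]` the ratio `(s + 1) (c - s) / c` is at least `1`, and its logarithm `∫ dt / t` is
bounded above by the trapezoidal rule with three panels, `1 / t` being convex. After clearing
denominators each panel is at most a quartic in `s`, and their sum is at most `s * p s`; these
polynomial inequalities are certified by nonnegative combinations of `(s - α) ^ i * (β - s) ^ j` on
`[2, c - 1]` or on its two halves. Finally `log (s - 1) * p s` has the explicit primitive
`P s * log (s - 1) + Q s`.
-/

/-- `Δ₁` with `θ = 0.838`. -/
noncomputable def Δ₁ : ℝ :=
  Real.log (5.995 * 0.838 - 1) +
    ∫ s in (2 : ℝ)..(5.995 * 0.838 - 2),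
      Real.log (s - 1) / s * Real.log ((5.995 * 0.838 - 1) / (s + 1))

/-- `Δ₂` with `θ = 0.838`. -/
noncomputable def Δ₂ : ℝ :=
  Real.log ((11.99 * 0.838 - 2) / (3 * 0.838 - 2)) +
    ∫ s in (2 : ℝ)..(5.995 * 0.838 - 2),
      Real.log (s - 1) / s *
        Real.log ((5.995 * 0.838 - 1) * (5.995 * 0.838 - 1 - s) / (s + 1))

open Real MeasureTheory Set

noncomputable def trapezoidLog (a b : ℝ) : ℝ := (b - a) / 2 * (a⁻¹ + b⁻¹)

lemma log_div_le_trapezoidLog {a b : ℝ} (ha : 0 < a) (hab : a ≤ b) :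
    log (b / a) ≤ trapezoidLog a b := by
  have hb : 0 < b := ha.trans_le hab
  calc log (b / a) ≤ sinh (log (b / a)) :=
        self_le_sinh_iff.2 (log_nonneg ((one_le_div ha).2 hab))
    _ = trapezoidLog a b := by
      rw [sinh_log (by positivity), trapezoidLog]
      field_simp
      ring

lemma log_div_le_trapezoidLog_three {a b : ℝ} (ha : 0 < a) (hab : a ≤ b) :
    log (b / a) ≤ trapezoidLog a ((2 * a + b) / 3)
      + trapezoidLog ((2 * a + b) / 3) ((a + 2 * b) / 3) + trapezoidLog ((a + 2 * b) / 3) b := by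
  have hb : 0 < b := ha.trans_le hab
  have h₁ : 0 < (2 * a + b) / 3 := by linarith
  have h₂ : 0 < (a + 2 * b) / 3 := by linarith
  have hsplit : b / a = (2 * a + b) / 3 / a * ((a + 2 * b) / 3 / ((2 * a + b) / 3))
      * (b / ((a + 2 * b) / 3)) := by
    field_simp [h₁.ne', h₂.ne']
  rw [hsplit, log_mul (by positivity) (by positivity), log_mul (by positivity) (by positivity)]
  gcongr ?_ + ?_ + ?_ <;> apply log_div_le_trapezoidLog <;> linarith

lemma trapezoidLog_le_iff {p q r : ℝ} (hp : 0 < p) (hq : 0 < q) :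
    trapezoidLog p q ≤ r ↔ (q - p) * (p + q) ≤ 2 * p * q * r := by
  rw [trapezoidLog, show (q - p) / 2 * (p⁻¹ + q⁻¹) = (q - p) * (p + q) / (2 * p * q) by
    field_simp; ring, div_le_iff₀ (by positivity)]
  ring_nf

lemma sub_pow_mul_sub_pow_nonneg {s p q : ℝ} (hp : p ≤ s) (hq : s ≤ q) (i j : ℕ) :
    0 ≤ (s - p) ^ i * (q - s) ^ j :=
  mul_nonneg (pow_nonneg (by linarith) _) (pow_nonneg (by linarith) _)

theorem integral_log_sub_one_mul_eq {a b : ℝ} {p P Q : ℝ → ℝ} (ha : 1 < a) (hb : 1 < b)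
    (hp : ContinuousOn p (uIcc a b)) (hP : ∀ x ∈ uIcc a b, HasDerivAt P (p x) x)
    (hQ : ∀ x ∈ uIcc a b, HasDerivAt Q (-(P x / (x - 1))) x) :
    ∫ x in a..b, log (x - 1) * p x = P b * log (b - 1) + Q b - (P a * log (a - 1) + Q a) := by
  have hx : ∀ x ∈ uIcc a b, x - 1 ≠ 0 := fun x hx => by
    rcases mem_uIcc.1 hx with h | h <;> linarith [h.1]
  refine intervalIntegral.integral_eq_sub_of_hasDerivAt
    (f := fun x => P x * log (x - 1) + Q x) (fun x hx' => ?_) ?_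
  · have h := (hP x hx').mul (((hasDerivAt_id x).sub_const 1).log (hx x hx')) |>.add (hQ x hx')
    refine h.congr_deriv ?_
    simp only [id]
    field_simp [hx x hx']
    ring
  · exact ((continuous_sub_right 1).continuousOn.log hx).mul hp |>.intervalIntegrable

lemma one_lt_and_lt_of_mem_uIcc {c s : ℝ} (hc : 2 < c) (hs : s ∈ uIcc 2 (c - 1)) :
    1 < s ∧ s < c := by
  rcases mem_uIcc.1 hs with h | h <;> constructor <;> linarith [h.1, h.2]

lemma intervalIntegrable_log_sub_one_div_mul_log_div {c : ℝ} (hc : 2 < c) {u v : ℝ → ℝ}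
    (hu : Continuous u) (hv : Continuous v) (huv : ∀ s, 1 < s → s < c → 0 < u s ∧ 0 < v s) :
    IntervalIntegrable (fun s => log (s - 1) / s * log (u s / v s)) volume 2 (c - 1) := by
  have hs := fun s (hs : s ∈ uIcc 2 (c - 1)) => one_lt_and_lt_of_mem_uIcc hc hs
  refine ContinuousOn.intervalIntegrable (ContinuousOn.mul ?_ ?_)
  · refine ((continuous_sub_right 1).continuousOn.log fun s h => ?_).div continuousOn_id
      fun s h => ?_ <;> linarith [hs s h]
  · refine (hu.continuousOn.div hv.continuousOn fun s h => ?_).log fun s h => ?_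
    · exact (huv s (hs s h).1 (hs s h).2).2.ne'
    · obtain ⟨hu, hv⟩ := huv s (hs s h).1 (hs s h).2
      exact (div_pos hu hv).ne'

lemma integral_log_mul_sub_two_mul {c : ℝ} (hc : 2 < c) :
    (∫ s in (2 : ℝ)..c - 1, log (s - 1) / s * log (c * (c - s) / (s + 1)))
      - 2 * ∫ s in (2 : ℝ)..c - 1, log (s - 1) / s * log (c / (s + 1))
    = ∫ s in (2 : ℝ)..c - 1, log (s - 1) / s * log ((s + 1) * (c - s) / c) := by
  have hpos : ∀ s, 1 < s → s < c → 0 < s + 1 ∧ 0 < c - s :=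
    fun s h1 h2 => ⟨by linarith, by linarith⟩
  rw [← intervalIntegral.integral_const_mul, ← intervalIntegral.integral_sub]
  · refine intervalIntegral.integral_congr fun s hs => ?_
    obtain ⟨h1, h2⟩ := one_lt_and_lt_of_mem_uIcc hc hs
    obtain ⟨hs1, hcs⟩ := hpos s h1 h2
    have hc0 : 0 < c := by linarith
    rw [log_div (by positivity) hs1.ne', log_div hc0.ne' hs1.ne', log_div (by positivity) hc0.ne',
      log_mul hc0.ne' hcs.ne', log_mul hs1.ne' hcs.ne']
    ring
  · exact intervalIntegrable_log_sub_one_div_mul_log_div hc (by fun_prop) (by fun_prop)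
      fun s h1 h2 => ⟨mul_pos (by linarith) (hpos s h1 h2).2, (hpos s h1 h2).1⟩
  · exact (intervalIntegrable_log_sub_one_div_mul_log_div hc (by fun_prop) (by fun_prop)
      fun s h1 h2 => ⟨by linarith, (hpos s h1 h2).1⟩).const_mul 2

namespace DeltaBound

noncomputable def v (s : ℝ) : ℝ := (s + 1) * (4.02381 - s)

-- The coefficients below are numerical fits; only the inequalities proved about them matter.
noncomputable def r₁ (s : ℝ) : ℝ :=
  -0.074832168 + 0.380172811*s - 0.19210152*s^2 + 0.04052595*s^3 - 0.005247389*s^4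

noncomputable def r₂ (s : ℝ) : ℝ :=
  -0.314823933 + 0.793615371*s - 0.500442195*s^2 + 0.143437697*s^3 - 0.017641252*s^4

noncomputable def r₃ (s : ℝ) : ℝ :=
  -0.678455829 + 1.416154284*s - 0.927369747*s^2 + 0.273967029*s^3 - 0.032282324*s^4

noncomputable def p (s : ℝ) : ℝ :=
  0.418260281 + 0.136912553*s - 0.248816418*s^2 + 0.08623743*s^3 - 0.011258696*s^4

/-- The primitive of `p` vanishing at `1`, so that `P x / (x - 1)` is a polynomial. -/
noncomputable def P (s : ℝ) : ℝ :=
  -0.4230853698 + 0.418260281*s + 0.0684562765*s^2 - 0.082938806*s^3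
    + 0.0215593575*s^4 - 0.0022517392*s^5

noncomputable def Q (s : ℝ) : ℝ :=
  0.74895709232 - 0.4230853698*s - 0.0024125444*s^2 + 0.0212103959*s^3
    - 0.004826904575*s^4 + 0.00045034784*s^5

section Panels

variable {s : ℝ} (h₂ : 2 ≤ s) (hb : s ≤ 3.02381)
include h₂ hb

lemma le_v : 4.02381 ≤ v s := by
  unfold v
  nlinarith

lemma trapezoidLog_panel₁_le : trapezoidLog 4.02381 ((2 * 4.02381 + v s) / 3) ≤ r₁ s := by
  have hv := le_v h₂ hb
  have B := sub_pow_mul_sub_pow_nonneg h₂ hb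
  rw [trapezoidLog_le_iff (by norm_num) (by linarith)]
  simp only [v, r₁]
  linarith [B 0 6, B 1 5, B 2 4, B 3 3, B 4 2, B 5 1, B 6 0]

lemma trapezoidLog_panel₂_le :
    trapezoidLog ((2 * 4.02381 + v s) / 3) ((4.02381 + 2 * v s) / 3) ≤ r₂ s := by
  have hv := le_v h₂ hb
  rw [trapezoidLog_le_iff (by linarith) (by linarith)]
  simp only [v, r₂]
  rcases le_total s 2.5 with hm | hm
  · have B := sub_pow_mul_sub_pow_nonneg h₂ hm
    linarith [B 0 8, B 1 7, B 2 6, B 3 5, B 4 4, B 5 3, B 6 2, B 7 1, B 8 0]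
  · have B := sub_pow_mul_sub_pow_nonneg hm hb
    linarith [B 0 8, B 1 7, B 2 6, B 3 5, B 4 4, B 5 3, B 6 2, B 7 1, B 8 0]

lemma trapezoidLog_panel₃_le : trapezoidLog ((4.02381 + 2 * v s) / 3) (v s) ≤ r₃ s := by
  have hv := le_v h₂ hb
  rw [trapezoidLog_le_iff (by linarith) (by linarith)]
  simp only [v, r₃]
  rcases le_total s 2.5 with hm | hm
  · have B := sub_pow_mul_sub_pow_nonneg h₂ hm
    linarith [B 0 8, B 1 7, B 2 6, B 3 5, B 4 4, B 5 3, B 6 2, B 7 1, B 8 0]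
  · have B := sub_pow_mul_sub_pow_nonneg hm hb
    linarith [B 0 14, B 1 13, B 2 12, B 3 11, B 4 10, B 5 9, B 6 8, B 7 7, B 8 6, B 9 5,
      B 10 4, B 11 3, B 12 2, B 13 1, B 14 0]

lemma r₁_add_r₂_add_r₃_le : r₁ s + r₂ s + r₃ s ≤ s * p s := by
  have B := sub_pow_mul_sub_pow_nonneg h₂ hb
  simp only [r₁, r₂, r₃, p]
  linarith [B 0 8, B 1 7, B 2 6, B 3 5, B 4 4, B 5 3, B 6 2, B 7 1, B 8 0]

lemma log_le_mul_p : log ((s + 1) * (4.02381 - s) / 4.02381) ≤ s * p s := by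
  calc log ((s + 1) * (4.02381 - s) / 4.02381) = log (v s / 4.02381) := rfl
    _ ≤ r₁ s + r₂ s + r₃ s := by
      refine (log_div_le_trapezoidLog_three (by norm_num) (le_v h₂ hb)).trans ?_
      gcongr ?_ + ?_ + ?_
      · exact trapezoidLog_panel₁_le h₂ hb
      · exact trapezoidLog_panel₂_le h₂ hb
      · exact trapezoidLog_panel₃_le h₂ hb
    _ ≤ s * p s := r₁_add_r₂_add_r₃_le h₂ hb

end Panels

lemma hasDerivAt_P (x : ℝ) : HasDerivAt P (p x) x := by
  have h := (((((hasDerivAt_id x).const_mul (0.418260281 : ℝ)).const_add (-0.4230853698)).add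
    ((hasDerivAt_pow 2 x).const_mul (0.0684562765 : ℝ))).sub
    ((hasDerivAt_pow 3 x).const_mul (0.082938806 : ℝ))).add
    ((hasDerivAt_pow 4 x).const_mul (0.0215593575 : ℝ)) |>.sub
    ((hasDerivAt_pow 5 x).const_mul (0.0022517392 : ℝ))
  exact h.congr_deriv (by simp only [p]; push_cast; ring)

lemma hasDerivAt_Q {x : ℝ} (hx : x ≠ 1) : HasDerivAt Q (-(P x / (x - 1))) x := by
  have h := (((((hasDerivAt_id x).const_mul (0.4230853698 : ℝ)).const_sub 0.74895709232).sub
    ((hasDerivAt_pow 2 x).const_mul (0.0024125444 : ℝ))).add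
    ((hasDerivAt_pow 3 x).const_mul (0.0212103959 : ℝ))).sub
    ((hasDerivAt_pow 4 x).const_mul (0.004826904575 : ℝ)) |>.add
    ((hasDerivAt_pow 5 x).const_mul (0.00045034784 : ℝ))
  refine h.congr_deriv ?_
  have : x - 1 ≠ 0 := sub_ne_zero.2 hx
  simp only [P]
  field_simp
  push_cast
  ring

lemma integral_log_sub_one_mul_p :
    ∫ s in (2 : ℝ)..3.02381, log (s - 1) * p s = P 3.02381 * log 2.02381 + Q 3.02381 := by
  rw [integral_log_sub_one_mul_eq (by norm_num) (by norm_num) (by unfold p; fun_prop)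
    (fun x _ => hasDerivAt_P x) fun x hx => hasDerivAt_Q ?_]
  · norm_num [Q]
  · rw [uIcc_of_le (by norm_num)] at hx
    exact (lt_of_lt_of_le (by norm_num) hx.1).ne'

lemma integral_log_div_mul_log_le_integral_log_sub_one_mul_p :
    ∫ s in (2 : ℝ)..3.02381, log (s - 1) / s * log ((s + 1) * (4.02381 - s) / 4.02381)
      ≤ ∫ s in (2 : ℝ)..3.02381, log (s - 1) * p s := by
  refine intervalIntegral.integral_mono_on (by norm_num) ?_ ?_ fun s hs => ?_
  · have h := intervalIntegrable_log_sub_one_div_mul_log_div (c := 4.02381) (by norm_num)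
      (u := fun s => (s + 1) * (4.02381 - s)) (v := fun _ => 4.02381) (by fun_prop)
      continuous_const fun s h1 h2 => ⟨mul_pos (by linarith) (by linarith), by norm_num⟩
    rwa [show (4.02381 : ℝ) - 1 = 3.02381 by norm_num] at h
  · refine ContinuousOn.intervalIntegrable (ContinuousOn.mul ?_ (by unfold p; fun_prop))
    refine (continuous_sub_right 1).continuousOn.log fun s hs => ?_
    rw [uIcc_of_le (by norm_num)] at hs
    linarith [hs.1]
  · obtain ⟨h₂, hb⟩ := hs
    rw [div_mul_eq_mul_div, div_le_iff₀ (by linarith), mul_assoc]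
    exact mul_le_mul_of_nonneg_left (by linarith [log_le_mul_p h₂ hb])
      (log_nonneg (by linarith))

lemma P_mul_log_add_Q_le : P 3.02381 * log 2.02381 + Q 3.02381 ≤ 0.0317253 := by
  have hlog : log 2.02381 ≤ log 2 + 0.011905 := by
    rw [show (2.02381 : ℝ) = 2 * 1.011905 by norm_num, log_mul (by norm_num) (by norm_num)]
    linarith [log_le_sub_one_of_pos (show (0 : ℝ) < 1.011905 by norm_num)]
  have hP : 0 ≤ P 3.02381 := by norm_num [P]
  have hnum : P 3.02381 * (0.6931471808 + 0.011905) + Q 3.02381 ≤ 0.0317253 := by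
    norm_num [P, Q]
  nlinarith [log_two_lt_d9]

end DeltaBound

lemma delta1_sub_half_delta2_eq : Δ₁ - 1 / 2 * Δ₂ = (log 1.03411917 -
    ∫ s in (2 : ℝ)..3.02381, log (s - 1) / s * log ((s + 1) * (4.02381 - s) / 4.02381)) / 2 := by
  have hlog : log ((11.99 * 0.838 - 2) / (3 * 0.838 - 2)) = 2 * log 4.02381 - log 1.03411917 := by
    rw [show (11.99 * 0.838 - 2) / (3 * 0.838 - 2) = (4.02381 : ℝ) ^ 2 / 1.03411917 by norm_num,
      log_div (by norm_num) (by norm_num), log_pow]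
    norm_num
  rw [show (3.02381 : ℝ) = 4.02381 - 1 by norm_num, ← integral_log_mul_sub_two_mul (by norm_num),
    Δ₁, Δ₂, hlog]
  norm_num
  ring

theorem delta1_minus_half_delta2 : Δ₁ - (1 / 2) * Δ₂ ≥ 0.0009 := by
  have hk : 0.0335468 ≤ log 1.03411917 := by
    have h := le_log_one_add_of_nonneg (show (0 : ℝ) ≤ 0.03411917 by norm_num)
    norm_num at h ⊢
    linarith
  have hI := DeltaBound.integral_log_div_mul_log_le_integral_log_sub_one_mul_p.trans_eq
    DeltaBound.integral_log_sub_one_mul_p |>.trans DeltaBound.P_mul_log_add_Q_le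
  rw [ge_iff_le, delta1_sub_half_delta2_eq]
  linarith
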